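/- arXiv:2210.05180 — 2 statements merged into one kernel-verified Lean document; each statement's English description precedes it below -/
import Mathlib

section
/- Let Q be a finite set of states, A a finite nonempty set of actions, G ⊆ Q a goal set, and H ∈ ℕ a horizon. Let P, P̂ : Q × A × Q → ℝ be substochastic transition functions (nonnegative with Σ_{q′} P(q,a,q′) ≤ 1 and Σ_{q′} P̂(q,a,q′) ≤ 1 for all q, a), and suppose δ ≥ 0 satisfies Σ_{q′ ∈ Q} |P(q,a,q′) − P̂(q,a,q′)| ≤ δ for all q ∈ Q and a ∈ A. Define value functions V_H(q) = 1_G(q) and, for k = H−1, …, 0, V_k(q) = 1_G(q) + 1_{Q∖G}(q) · max_{a ∈ A} Σ_{q′ ∈ Q} V_{k+1}(q′) P(q,a,q′); define V̂_k analogously with P̂ in place of P. Then for every k ∈ {0,…,H} and every q ∈ Q: |V_k(q) − V̂_k(q)| ≤ (H − k)·δ. -/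
/-!
Both value functions lie in `[0, 1]`. On the goal set they agree; off it, each is a maximum over
actions of `∑ V(q') P(q,a,q')`, and maxima over the same finite set differ by at most the largest
difference of their arguments. Writing
`∑ V P - ∑ V̂ P̂ = ∑ (V - V̂) P + ∑ V̂ (P - P̂)`, the first sum is at most the previous error since
`P(q,a,·)` is substochastic, and the second at most `δ` since `|V̂| ≤ 1`. Each remaining step
therefore adds `δ` to the error.
-/

/-- Finite-horizon dynamic-programming value function for maximal probability of
reaching the goal set `G` within a given number of remaining steps: `mdpVal P G j q`
is `V_k q` where `j = H - k` is the number of remaining steps. -/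
noncomputable def mdpVal {Q A : Type*} [Fintype Q] [Fintype A] [Nonempty A]
    (P : Q → A → Q → ℝ) (G : Set Q) : ℕ → Q → ℝ
  | 0 => fun q => Set.indicator G (fun _ => (1 : ℝ)) q
  | j + 1 => fun q =>
      Set.indicator G (fun _ => (1 : ℝ)) q +
        Set.indicator Gᶜ (fun _ => (1 : ℝ)) q *
          Finset.univ.sup' Finset.univ_nonempty
            (fun a => ∑ q', mdpVal P G j q' * P q a q')

open Finset

lemma Finset.abs_sup'_sub_sup'_le {ι α : Type*} [AddCommGroup α] [LinearOrder α]
    [IsOrderedAddMonoid α] {s : Finset ι} (hs : s.Nonempty) {f g : ι → α} {c : α}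
    (h : ∀ i ∈ s, |f i - g i| ≤ c) : |s.sup' hs f - s.sup' hs g| ≤ c := by
  rw [abs_sub_le_iff, sub_le_iff_le_add, sub_le_iff_le_add]
  constructor <;> refine sup'_le _ _ fun i hi => ?_
  · exact (sub_le_iff_le_add.1 (abs_sub_le_iff.1 (h i hi)).1).trans
      (add_le_add_right (le_sup' g hi) c)
  · exact (sub_le_iff_le_add.1 (abs_sub_le_iff.1 (h i hi)).2).trans
      (add_le_add_right (le_sup' f hi) c)

lemma abs_sum_mul_le_of_abs_le {ι : Type*} {s : Finset ι} {f p : ι → ℝ} {ε : ℝ}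
    (hε : 0 ≤ ε) (hf : ∀ i ∈ s, |f i| ≤ ε) (hp0 : ∀ i ∈ s, 0 ≤ p i)
    (hp1 : ∑ i ∈ s, p i ≤ 1) : |∑ i ∈ s, f i * p i| ≤ ε :=
  calc |∑ i ∈ s, f i * p i| ≤ ∑ i ∈ s, |f i| * p i := by
        refine (abs_sum_le_sum_abs _ _).trans (sum_le_sum fun i hi => ?_)
        rw [abs_mul, abs_of_nonneg (hp0 i hi)]
    _ ≤ ∑ i ∈ s, ε * p i :=
        sum_le_sum fun i hi => mul_le_mul_of_nonneg_right (hf i hi) (hp0 i hi)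
    _ = ε * ∑ i ∈ s, p i := (mul_sum _ _ _).symm
    _ ≤ ε := mul_le_of_le_one_right hε hp1

lemma abs_sum_mul_le_sum_abs_of_abs_le_one {ι : Type*} {s : Finset ι} {w d : ι → ℝ}
    (hw : ∀ i ∈ s, |w i| ≤ 1) : |∑ i ∈ s, w i * d i| ≤ ∑ i ∈ s, |d i| := by
  refine (abs_sum_le_sum_abs _ _).trans (sum_le_sum fun i hi => ?_)
  rw [abs_mul]
  exact mul_le_of_le_one_left (abs_nonneg _) (hw i hi)

lemma abs_sum_mul_sub_sum_mul_le {ι : Type*} {s : Finset ι} {v w p p' : ι → ℝ} {ε : ℝ}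
    (hε : 0 ≤ ε) (hvw : ∀ i ∈ s, |v i - w i| ≤ ε) (hw : ∀ i ∈ s, |w i| ≤ 1)
    (hp0 : ∀ i ∈ s, 0 ≤ p i) (hp1 : ∑ i ∈ s, p i ≤ 1) :
    |∑ i ∈ s, v i * p i - ∑ i ∈ s, w i * p' i| ≤ ε + ∑ i ∈ s, |p i - p' i| := by
  have hsplit : ∑ i ∈ s, v i * p i - ∑ i ∈ s, w i * p' i =
      ∑ i ∈ s, (v i - w i) * p i + ∑ i ∈ s, w i * (p i - p' i) := by
    rw [← sum_sub_distrib, ← sum_add_distrib]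
    exact sum_congr rfl fun i _ => by ring
  rw [hsplit]
  exact (abs_add_le _ _).trans (add_le_add (abs_sum_mul_le_of_abs_le hε hvw hp0 hp1)
    (abs_sum_mul_le_sum_abs_of_abs_le_one hw))

namespace mdpVal

variable {Q A : Type*} [Fintype Q] [Fintype A] [Nonempty A] {P : Q → A → Q → ℝ} {G : Set Q}

lemma succ_of_mem {j : ℕ} {q : Q} (hq : q ∈ G) : mdpVal P G (j + 1) q = 1 := by
  simp [mdpVal, hq]

lemma succ_of_notMem {j : ℕ} {q : Q} (hq : q ∉ G) :
    mdpVal P G (j + 1) q = univ.sup' univ_nonempty fun a => ∑ q', mdpVal P G j q' * P q a q' := by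
  simp [mdpVal, hq]

lemma mem_Icc (hP0 : ∀ q a q', 0 ≤ P q a q') (hP1 : ∀ q a, ∑ q', P q a q' ≤ 1) :
    ∀ j q, mdpVal P G j q ∈ Set.Icc 0 1 := by
  intro j
  induction j with
  | zero => intro q; by_cases hq : q ∈ G <;> simp [mdpVal, hq]
  | succ j ih =>
    intro q
    by_cases hq : q ∈ G
    · simp [succ_of_mem hq]
    have hsum : ∀ a, ∑ q', mdpVal P G j q' * P q a q' ∈ Set.Icc 0 1 := fun a =>
      ⟨sum_nonneg fun q' _ => mul_nonneg (ih q').1 (hP0 q a q'),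
        (sum_le_sum fun q' _ => mul_le_of_le_one_left (hP0 q a q') (ih q').2).trans (hP1 q a)⟩
    rw [succ_of_notMem hq]
    exact ⟨(hsum (Classical.arbitrary A)).1.trans
        (le_sup' (fun a => ∑ q', mdpVal P G j q' * P q a q') (mem_univ _)),
      sup'_le _ _ fun a _ => (hsum a).2⟩

lemma abs_le_one (hP0 : ∀ q a q', 0 ≤ P q a q') (hP1 : ∀ q a, ∑ q', P q a q' ≤ 1) (j : ℕ)
    (q : Q) : |mdpVal P G j q| ≤ 1 :=
  have h := mem_Icc (G := G) hP0 hP1 j q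
  (abs_of_nonneg h.1).trans_le h.2

lemma abs_sub_le {Phat : Q → A → Q → ℝ}
    (hP0 : ∀ q a q', 0 ≤ P q a q') (hP1 : ∀ q a, ∑ q', P q a q' ≤ 1)
    (hPh0 : ∀ q a q', 0 ≤ Phat q a q') (hPh1 : ∀ q a, ∑ q', Phat q a q' ≤ 1)
    {δ : ℝ} (hδ : 0 ≤ δ) (hTV : ∀ q a, ∑ q', |P q a q' - Phat q a q'| ≤ δ) :
    ∀ j q, |mdpVal P G j q - mdpVal Phat G j q| ≤ j * δ := by
  intro j
  induction j with
  | zero => intro q; simp [mdpVal]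
  | succ j ih =>
    intro q
    by_cases hq : q ∈ G
    · rw [succ_of_mem hq, succ_of_mem hq, sub_self, abs_zero]
      positivity
    rw [succ_of_notMem hq, succ_of_notMem hq, Nat.cast_succ, add_one_mul]
    refine abs_sup'_sub_sup'_le univ_nonempty fun a _ => ?_
    exact (abs_sum_mul_sub_sum_mul_le (by positivity) (fun q' _ => ih q')
      (fun q' _ => abs_le_one hPh0 hPh1 j q') (fun q' _ => hP0 q a q') (hP1 q a)).trans
      (add_le_add_right (hTV q a) _)

end mdpVal

theorem stmt11 {Q A : Type*} [Fintype Q] [Fintype A] [Nonempty A]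
    (P Phat : Q → A → Q → ℝ) (G : Set Q) (H : ℕ)
    (hP0 : ∀ q a q', 0 ≤ P q a q') (hP1 : ∀ q a, ∑ q', P q a q' ≤ 1)
    (hPh0 : ∀ q a q', 0 ≤ Phat q a q') (hPh1 : ∀ q a, ∑ q', Phat q a q' ≤ 1)
    (δ : ℝ) (hδ : 0 ≤ δ)
    (hTV : ∀ q a, ∑ q', |P q a q' - Phat q a q'| ≤ δ) :
    ∀ k ≤ H, ∀ q,
      |mdpVal P G (H - k) q - mdpVal Phat G (H - k) q| ≤ ((H - k : ℕ) : ℝ) * δ :=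
  fun k _ q => mdpVal.abs_sub_le hP0 hP1 hPh0 hPh1 hδ hTV (H - k) q
end

section
/- Let Q be a finite set of states, A a finite nonempty set of actions, G ⊆ Q a goal set, and H ∈ ℕ a horizon. Let P, P̂ : Q × A × Q → ℝ be substochastic transition functions (nonnegative with row sums at most 1), and suppose δ ≥ 0 satisfies Σ_{q′ ∈ Q} |P(q,a,q′) − P̂(q,a,q′)| ≤ δ for all q, a. Define V̂_H(q) = 1_G(q) and V̂_k(q) = 1_G(q) + 1_{Q∖G}(q) · max_{a ∈ A} Σ_{q′} V̂_{k+1}(q′) P̂(q,a,q′) for k = H−1,…,0. For each k, let σ_k : Q → A be a greedy selector for V̂, i.e., Σ_{q′} V̂_{k+1}(q′) P̂(q, σ_k(q), q′) = max_{a ∈ A} Σ_{q′} V̂_{k+1}(q′) P̂(q,a,q′) for all q. Define the policy value under the true kernel by W_H(q) = 1_G(q) and W_k(q) = 1_G(q) + 1_{Q∖G}(q) · Σ_{q′} W_{k+1}(q′) P(q, σ_k(q), q′). Then for every k ∈ {0,…,H} and every q ∈ Q: |W_k(q) − V̂_k(q)| ≤ (H − k)·δ. -/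
/-- Value of the time-dependent policy `σ` under kernel `P` for horizon `H`:
`polVal P G σ H j q` is `W_k q` where `j = H - k` is the number of remaining steps,
so the action used at `q` with `j + 1` steps remaining is `σ (H - (j+1)) q`. -/
noncomputable def polVal {Q A : Type*} [Fintype Q]
    (P : Q → A → Q → ℝ) (G : Set Q) (σ : ℕ → Q → A) (H : ℕ) : ℕ → Q → ℝ
  | 0 => fun q => Set.indicator G (fun _ => (1 : ℝ)) q
  | j + 1 => fun q =>
      Set.indicator G (fun _ => (1 : ℝ)) q +
        Set.indicator Gᶜ (fun _ => (1 : ℝ)) q *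
          ∑ q', polVal P G σ H j q' * P q (σ (H - (j + 1)) q) q'

open Finset Set

section WeightedSums

variable {Q : Type*} [Fintype Q]

theorem sum_mul_mem_Icc_of_substochastic {f p : Q → ℝ} (hf : ∀ q, f q ∈ Icc (0 : ℝ) 1)
    (hp0 : ∀ q, 0 ≤ p q) (hp1 : ∑ q, p q ≤ 1) : ∑ q, f q * p q ∈ Icc (0 : ℝ) 1 := by
  refine ⟨sum_nonneg fun q _ => mul_nonneg (hf q).1 (hp0 q), ?_⟩
  calc ∑ q, f q * p q ≤ ∑ q, p q :=
        sum_le_sum fun q _ => mul_le_of_le_one_left (hp0 q) (hf q).2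
    _ ≤ 1 := hp1

theorem abs_sum_mul_sub_sum_mul_le_s12 {f g p p' : Q → ℝ} {ε : ℝ} (hε : 0 ≤ ε)
    (hfg : ∀ q, |f q - g q| ≤ ε) (hg : ∀ q, |g q| ≤ 1)
    (hp0 : ∀ q, 0 ≤ p q) (hp1 : ∑ q, p q ≤ 1) :
    |∑ q, f q * p q - ∑ q, g q * p' q| ≤ ε + ∑ q, |p q - p' q| := by
  have hsplit : ∑ q, f q * p q - ∑ q, g q * p' q =
      ∑ q, (f q - g q) * p q + ∑ q, g q * (p q - p' q) := by
    rw [← sum_sub_distrib, ← sum_add_distrib]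
    exact sum_congr rfl fun q _ => by ring
  have hdrift : |∑ q, (f q - g q) * p q| ≤ ε :=
    calc |∑ q, (f q - g q) * p q| ≤ ∑ q, |f q - g q| * p q := by
          refine (abs_sum_le_sum_abs _ _).trans_eq (sum_congr rfl fun q _ => ?_)
          rw [abs_mul, abs_of_nonneg (hp0 q)]
      _ ≤ ∑ q, ε * p q := sum_le_sum fun q _ => mul_le_mul_of_nonneg_right (hfg q) (hp0 q)
      _ = ε * ∑ q, p q := (mul_sum _ _ _).symm
      _ ≤ ε := mul_le_of_le_one_right hε hp1
  have hkernel : |∑ q, g q * (p q - p' q)| ≤ ∑ q, |p q - p' q| :=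
    calc |∑ q, g q * (p q - p' q)| ≤ ∑ q, |g q| * |p q - p' q| := by
          simpa only [abs_mul] using abs_sum_le_sum_abs (fun q => g q * (p q - p' q)) univ
      _ ≤ ∑ q, |p q - p' q| :=
          sum_le_sum fun q _ => mul_le_of_le_one_left (abs_nonneg _) (hg q)
  rw [hsplit]
  exact (abs_add_le _ _).trans (add_le_add hdrift hkernel)

end WeightedSums

section ValueFunctions

variable {Q A : Type*} [Fintype Q] {G : Set Q} {q : Q}

theorem mdpVal_of_mem [Fintype A] [Nonempty A] (P : Q → A → Q → ℝ) (hq : q ∈ G) :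
    ∀ j, mdpVal P G j q = 1
  | 0 => by simp [mdpVal, hq]
  | _ + 1 => by simp [mdpVal, hq]

theorem mdpVal_succ_of_notMem [Fintype A] [Nonempty A] (P : Q → A → Q → ℝ) (hq : q ∉ G)
    (j : ℕ) : mdpVal P G (j + 1) q = univ.sup' univ_nonempty
      (fun a => ∑ q', mdpVal P G j q' * P q a q') := by
  simp [mdpVal, hq]

theorem polVal_of_mem (P : Q → A → Q → ℝ) (σ : ℕ → Q → A) (H : ℕ) (hq : q ∈ G) :
    ∀ j, polVal P G σ H j q = 1
  | 0 => by simp [polVal, hq]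
  | _ + 1 => by simp [polVal, hq]

theorem polVal_succ_of_notMem (P : Q → A → Q → ℝ) (σ : ℕ → Q → A) (H : ℕ) (hq : q ∉ G)
    (j : ℕ) : polVal P G σ H (j + 1) q = ∑ q', polVal P G σ H j q' * P q (σ (H - (j + 1)) q) q' := by
  simp [polVal, hq]

theorem mdpVal_mem_Icc [Fintype A] [Nonempty A] {P : Q → A → Q → ℝ}
    (hP0 : ∀ q a q', 0 ≤ P q a q') (hP1 : ∀ q a, ∑ q', P q a q' ≤ 1) :
    ∀ j q, mdpVal P G j q ∈ Icc (0 : ℝ) 1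
  | 0, q => by by_cases hq : q ∈ G <;> simp [mdpVal, hq]
  | j + 1, q => by
    by_cases hq : q ∈ G
    · simp [mdpVal_of_mem P hq]
    have hrow (a : A) := sum_mul_mem_Icc_of_substochastic (mdpVal_mem_Icc hP0 hP1 j)
      (hP0 q a) (hP1 q a)
    rw [mdpVal_succ_of_notMem P hq]
    exact ⟨(hrow (Classical.arbitrary A)).1.trans
      (le_sup' (fun a => ∑ q', mdpVal P G j q' * P q a q') (mem_univ _)),
      sup'_le _ _ fun a _ => (hrow a).2⟩

theorem abs_mdpVal_le_one [Fintype A] [Nonempty A] {P : Q → A → Q → ℝ}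
    (hP0 : ∀ q a q', 0 ≤ P q a q') (hP1 : ∀ q a, ∑ q', P q a q' ≤ 1) (j : ℕ) (q : Q) :
    |mdpVal P G j q| ≤ 1 :=
  have h := mdpVal_mem_Icc (G := G) hP0 hP1 j q
  abs_le.2 ⟨by linarith [h.1], h.2⟩

end ValueFunctions

theorem stmt12 {Q A : Type*} [Fintype Q] [Fintype A] [Nonempty A]
    (P Phat : Q → A → Q → ℝ) (G : Set Q) (H : ℕ)
    (hP0 : ∀ q a q', 0 ≤ P q a q') (hP1 : ∀ q a, ∑ q', P q a q' ≤ 1)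
    (hPh0 : ∀ q a q', 0 ≤ Phat q a q') (hPh1 : ∀ q a, ∑ q', Phat q a q' ≤ 1)
    (δ : ℝ) (hδ : 0 ≤ δ)
    (hTV : ∀ q a, ∑ q', |P q a q' - Phat q a q'| ≤ δ)
    (σ : ℕ → Q → A)
    (hgreedy : ∀ k < H, ∀ q,
        ∑ q', mdpVal Phat G (H - (k + 1)) q' * Phat q (σ k q) q' =
          Finset.univ.sup' Finset.univ_nonempty
            (fun a => ∑ q', mdpVal Phat G (H - (k + 1)) q' * Phat q a q')) :
    ∀ k ≤ H, ∀ q,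
      |polVal P G σ H (H - k) q - mdpVal Phat G (H - k) q| ≤ ((H - k : ℕ) : ℝ) * δ := by
  suffices h : ∀ j ≤ H, ∀ q, |polVal P G σ H j q - mdpVal Phat G j q| ≤ j * δ from
    fun k _ q => h (H - k) (Nat.sub_le H k) q
  intro j
  induction j with
  | zero => simp [polVal, mdpVal]
  | succ j ih =>
    intro hj q
    by_cases hq : q ∈ G
    · rw [polVal_of_mem P σ H hq, mdpVal_of_mem Phat hq, sub_self, abs_zero]
      positivity
    have hgreedy_j := hgreedy (H - (j + 1)) (by omega) q
    rw [show H - (H - (j + 1) + 1) = j by omega] at hgreedy_j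
    rw [polVal_succ_of_notMem P σ H hq, mdpVal_succ_of_notMem Phat hq, ← hgreedy_j]
    calc _ ≤ j * δ + ∑ q', |P q _ q' - Phat q _ q'| :=
          abs_sum_mul_sub_sum_mul_le_s12 (by positivity) (ih (by omega))
            (abs_mdpVal_le_one hPh0 hPh1 j) (hP0 q _) (hP1 q _)
      _ ≤ j * δ + δ := by gcongr; exact hTV q _
      _ = ((j + 1 : ℕ) : ℝ) * δ := by push_cast; ring
end
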